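/- Let R be a commutative ring, let m ≥ 1, let n_1,…,n_m be positive integers with n_1 + ⋯ + n_m = n, and let u_1,…,u_m ∈ R. Suppose that for each i with 1 ≤ i ≤ m there are elements y^{(i)}_1,…,y^{(i)}_{n_i} ∈ R, each lying in the additive subgroup of R generated by u_1,…,u_{i−1}, such that u_i · ∏_{j=1}^{n_i} (u_i + y^{(i)}_j) = 0. Then every monomial u_1^{l_1} u_2^{l_2} ⋯ u_m^{l_m} with l_1 + ⋯ + l_m ≥ n + 1 is zero; consequently, for any element z of the additive subgroup of R generated by u_1,…,u_m, every monomial z^{l_0} u_1^{l_1} ⋯ u_m^{l_m} with l_0 + l_1 + ⋯ + l_m = n + 1 is zero. -/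

import Mathlib

/-! If `I ^ (N + 1) = 0`, every `y j` lies in `I` and `v * ∏_{j ∈ s} (v + y j) = 0`, then expanding
the product shows `v ^ (#s + 1) ∈ I * J ^ #s` for `J = I + (v)`, hence `J ^ (#s + 1) ≤ I * J ^ #s`;
iterating, `J ^ (N + #s + 1) ≤ I ^ (N + 1) * J ^ #s = 0`. Adjoining `u 0, …, u (m - 1)` one at a
time, the ideal `A` they generate satisfies `A ^ (n + 1) = 0`, and every monomial in question lies
in `A ^ (n + 1)`. -/

open Finset

namespace Ideal

variable {R : Type*} [CommRing R]

theorem sup_span_singleton_pow_succ_le (I : Ideal R) (v : R) (k : ℕ) :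
    (I ⊔ span {v}) ^ (k + 1) ≤ I * (I ⊔ span {v}) ^ k ⊔ span {v ^ (k + 1)} := by
  induction k with
  | zero => simp
  | succ k ih =>
    have hv : span {v ^ (k + 1)} ≤ (I ⊔ span {v}) ^ (k + 1) := by
      rw [← span_singleton_pow]; exact pow_le_pow_left' le_sup_right _
    calc (I ⊔ span {v}) ^ (k + 1 + 1) = (I ⊔ span {v}) * (I ⊔ span {v}) ^ (k + 1) := pow_succ' _ _
      _ ≤ (I ⊔ span {v}) * (I * (I ⊔ span {v}) ^ k ⊔ span {v ^ (k + 1)}) := mul_mono_right ih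
      _ = I * (I ⊔ span {v}) ^ (k + 1) ⊔ (I * span {v ^ (k + 1)} ⊔ span {v ^ (k + 1 + 1)}) := by
        rw [mul_sup, mul_left_comm, ← pow_succ', sup_mul I, span_singleton_mul_span_singleton,
          ← pow_succ']
      _ ≤ I * (I ⊔ span {v}) ^ (k + 1) ⊔ span {v ^ (k + 1 + 1)} := by
        rw [← sup_assoc]; gcongr; exact sup_le le_rfl (mul_mono_right hv)

theorem mul_prod_add_sub_pow_mem {ι : Type*} {I : Ideal R} (v : R) {s : Finset ι} {y : ι → R}
    (hy : ∀ j ∈ s, y j ∈ I) :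
    v * ∏ j ∈ s, (v + y j) - v ^ (#s + 1) ∈ I * (I ⊔ span {v}) ^ #s := by
  classical
  have hv : v ∈ I ⊔ span {v} := mem_sup_right (mem_span_singleton_self v)
  induction s using Finset.cons_induction with
  | empty => simp
  | cons a s ha ih =>
    have hya := hy a (mem_cons_self a s)
    have hs := ih fun j hj => hy j (mem_cons_of_mem hj)
    have key : v * ∏ j ∈ cons a s ha, (v + y j) - v ^ (#(cons a s ha) + 1)
        = (v + y a) * (v * ∏ j ∈ s, (v + y j) - v ^ (#s + 1)) + y a * v ^ (#s + 1) := by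
      rw [prod_cons, card_cons]; ring
    rw [key, card_cons]
    refine add_mem ?_ (mul_mem_mul hya (pow_mem_pow hv _))
    rw [pow_succ', mul_left_comm]
    exact mul_mem_mul (add_mem hv (mem_sup_left hya)) hs

theorem sup_span_singleton_pow_succ_le_mul {ι : Type*} {I : Ideal R} {v : R} {s : Finset ι}
    {y : ι → R} (hy : ∀ j ∈ s, y j ∈ I) (h : v * ∏ j ∈ s, (v + y j) = 0) :
    (I ⊔ span {v}) ^ (#s + 1) ≤ I * (I ⊔ span {v}) ^ #s := by
  have hv : v ^ (#s + 1) ∈ I * (I ⊔ span {v}) ^ #s := by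
    simpa [h] using neg_mem (mul_prod_add_sub_pow_mem v hy)
  exact (sup_span_singleton_pow_succ_le I v #s).trans
    (sup_le le_rfl ((span_singleton_le_iff_mem _).mpr hv))

theorem pow_add_le_pow_mul_of_pow_succ_le_mul {I J : Ideal R} {c : ℕ}
    (h : J ^ (c + 1) ≤ I * J ^ c) (r : ℕ) : J ^ (c + r) ≤ I ^ r * J ^ c := by
  induction r with
  | zero => simp
  | succ r ih =>
    calc J ^ (c + (r + 1)) = J ^ (c + 1) * J ^ r := by rw [← pow_add, Nat.add_assoc, Nat.add_comm 1]
      _ ≤ I * J ^ c * J ^ r := mul_mono_left h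
      _ = I * J ^ (c + r) := by rw [mul_assoc, pow_add]
      _ ≤ I * (I ^ r * J ^ c) := mul_mono_right ih
      _ = I ^ (r + 1) * J ^ c := by rw [pow_succ', mul_assoc]

theorem sup_span_singleton_pow_eq_bot {ι : Type*} {I : Ideal R} {N : ℕ} (hI : I ^ (N + 1) = ⊥)
    {v : R} {s : Finset ι} {y : ι → R} (hy : ∀ j ∈ s, y j ∈ I)
    (h : v * ∏ j ∈ s, (v + y j) = 0) : (I ⊔ span {v}) ^ (N + #s + 1) = ⊥ := by
  have := pow_add_le_pow_mul_of_pow_succ_le_mul (sup_span_singleton_pow_succ_le_mul hy h) (N + 1)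
  rwa [hI, bot_mul, le_bot_iff, Nat.add_comm #s, Nat.add_right_comm] at this

theorem prod_pow_mem_pow_sum {ι : Type*} {I : Ideal R} {s : Finset ι} {u : ι → R}
    (hu : ∀ i ∈ s, u i ∈ I) (l : ι → ℕ) : ∏ i ∈ s, u i ^ l i ∈ I ^ ∑ i ∈ s, l i := by
  rw [← prod_pow_eq_pow_sum]
  exact prod_mem_prod fun i hi => pow_mem_pow (hu i hi) _

theorem mem_span_of_mem_addSubgroupClosure {s : Set R} {x : R}
    (hx : x ∈ AddSubgroup.closure s) : x ∈ span s :=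
  (AddSubgroup.closure_le (span s).toAddSubgroup).mpr subset_span hx

end Ideal

open Ideal

theorem span_image_Iio_pow_eq_bot {R : Type*} [CommRing R] {m : ℕ} (nn : ℕ → ℕ) (u : ℕ → R)
    (y : ℕ → ℕ → R) (hy : ∀ i < m, ∀ j < nn i, y i j ∈ span (u '' Set.Iio i))
    (hu : ∀ i < m, u i * ∏ j ∈ range (nn i), (u i + y i j) = 0) {k : ℕ} (hk : k ≤ m) :
    span (u '' Set.Iio k) ^ (∑ i ∈ range k, nn i + 1) = ⊥ := by
  induction k with
  | zero => simp
  | succ k ih =>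
    have hkm : k < m := hk
    have hsucc : u '' Set.Iio (k + 1) = insert (u k) (u '' Set.Iio k) := by
      rw [← Order.succ_eq_add_one, Order.Iio_succ_eq_insert, Set.image_insert_eq]
    rw [hsucc, span_insert, sup_comm, sum_range_succ, ← card_range (nn k)]
    exact sup_span_singleton_pow_eq_bot (ih hkm.le) (fun j hj => hy k hkm j (mem_range.mp hj))
      (hu k hkm)

theorem stmt11_general (R : Type*) [CommRing R] (m : ℕ)
    (nn : ℕ → ℕ) (n : ℕ)
    (hsum : ∑ i ∈ Finset.range m, nn i = n)
    (u : ℕ → R) (y : ℕ → ℕ → R)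
    (hy : ∀ i < m, ∀ j < nn i, y i j ∈ AddSubgroup.closure (u '' Set.Iio i))
    (hu : ∀ i < m, u i * ∏ j ∈ Finset.range (nn i), (u i + y i j) = 0) :
    (∀ l : ℕ → ℕ, n + 1 ≤ ∑ i ∈ Finset.range m, l i →
      ∏ i ∈ Finset.range m, u i ^ l i = 0) ∧
    ∀ z ∈ AddSubgroup.closure (u '' Set.Iio m), ∀ (l0 : ℕ) (l : ℕ → ℕ),
      l0 + ∑ i ∈ Finset.range m, l i = n + 1 →
      z ^ l0 * ∏ i ∈ Finset.range m, u i ^ l i = 0 := by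
  subst hsum
  set A := span (u '' Set.Iio m)
  have hA : A ^ (∑ i ∈ range m, nn i + 1) = ⊥ := span_image_Iio_pow_eq_bot nn u y
    (fun i hi j hj => mem_span_of_mem_addSubgroupClosure (hy i hi j hj)) hu le_rfl
  have hmono (l : ℕ → ℕ) : ∏ i ∈ range m, u i ^ l i ∈ A ^ ∑ i ∈ range m, l i := by
    refine prod_pow_mem_pow_sum (fun i hi => ?_) l
    exact subset_span (Set.mem_image_of_mem u (Set.mem_Iio.mpr (mem_range.mp hi)))
  refine ⟨fun l hl => ?_, fun z hz l0 l hl => ?_⟩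
  · rw [← mem_bot, ← hA]
    exact pow_le_pow_right hl (hmono l)
  · rw [← mem_bot, ← hA, ← hl, pow_add]
    exact mul_mem_mul (pow_mem_pow (mem_span_of_mem_addSubgroupClosure hz) l0) (hmono l)

/-- If `u i * ∏_{j < nn i} (u i + y i j) = 0` with each `y i j` in the
additive subgroup generated by the earlier `u t`, and `n = nn 0 + ⋯ + nn (m-1)`,
then every monomial in `u 0, …, u (m-1)` of total degree `≥ n + 1` vanishes;
consequently, for any `z` in the additive subgroup generated by
`u 0, …, u (m-1)`, every monomial `z^{l₀} u 0^{l 0} ⋯ u (m-1)^{l (m-1)}` of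
total degree `n + 1` vanishes. -/
theorem stmt11 (R : Type*) [CommRing R] (m : ℕ) (hm : 1 ≤ m)
    (nn : ℕ → ℕ) (hn : ∀ i < m, 1 ≤ nn i) (n : ℕ)
    (hsum : ∑ i ∈ Finset.range m, nn i = n)
    (u : ℕ → R) (y : ℕ → ℕ → R)
    (hy : ∀ i < m, ∀ j < nn i, y i j ∈ AddSubgroup.closure (u '' Set.Iio i))
    (hu : ∀ i < m, u i * ∏ j ∈ Finset.range (nn i), (u i + y i j) = 0) :
    (∀ l : ℕ → ℕ, n + 1 ≤ ∑ i ∈ Finset.range m, l i →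
      ∏ i ∈ Finset.range m, u i ^ l i = 0) ∧
    ∀ z ∈ AddSubgroup.closure (u '' Set.Iio m), ∀ (l0 : ℕ) (l : ℕ → ℕ),
      l0 + ∑ i ∈ Finset.range m, l i = n + 1 →
      z ^ l0 * ∏ i ∈ Finset.range m, u i ^ l i = 0 :=
  stmt11_general R m nn n hsum u y hy hu
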